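/- arXiv:2111.05477 — 2 statements merged into one kernel-verified Lean document; each statement's English description precedes it below -/
import Mathlib

section
/- Let Λ be a compact invariant set of a flow, and suppose for each n ≥ 1 there is a compact invariant subset Λ_n ⊂ Λ and an invariant probability ν_n with supp(ν_n) = Λ_n, such that the set G_{ν_n} of ν_n-generic points is non-empty and Λ_n → Λ in the Hausdorff distance. Then ⋃_n G_{ν_n} is dense in Λ; in particular, if each ν_n satisfies ∫g dν_n = a for a continuous g, then the level set R_g(a) = {x : lim (1/T)∫_0^T g(φ_t x)dt = a} is dense in Λ. -/
open MeasureTheory Filter Topology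

/-- The empirical measure of `x` at time `t` for the flow `φ`. -/
noncomputable def empFlow {Λ : Type*} [MeasurableSpace Λ]
    (φ : ℝ → Λ → Λ) (x : Λ) (t : ℝ) : MeasureTheory.Measure Λ :=
  (ENNReal.ofReal t)⁻¹ •
    MeasureTheory.Measure.map (fun s => φ s x)
      (MeasureTheory.volume.restrict (Set.Ioc (0 : ℝ) t))

/-- `x` is a generic point of `ν`: the empirical measures of `x` converge weakly* to `ν`. -/
def GenericPt {Λ : Type*} [TopologicalSpace Λ] [MeasurableSpace Λ]
    (φ : ℝ → Λ → Λ) (ν : MeasureTheory.ProbabilityMeasure Λ) (x : Λ) : Prop :=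
  ∀ g : C(Λ, ℝ), Filter.Tendsto (fun t : ℝ => ∫ y, g y ∂(empFlow φ x t))
    Filter.atTop (nhds (∫ y, g y ∂(ν : MeasureTheory.Measure Λ)))

section aux

set_option linter.unusedSectionVars false

variable {Λ : Type*} [MetricSpace Λ] [CompactSpace Λ] [MeasurableSpace Λ] [BorelSpace Λ]
  {φ : ℝ → Λ → Λ}

lemma cont_orbit (hφc : Continuous fun p : ℝ × Λ => φ p.1 p.2) (x : Λ) :
    Continuous fun s => φ s x :=
  hφc.comp (continuous_id.prodMk continuous_const)

lemma emp_integral_eq (hφc : Continuous fun p : ℝ × Λ => φ p.1 p.2)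
    (g : C(Λ, ℝ)) (x : Λ) {t : ℝ} (ht : 0 < t) :
    ∫ y, g y ∂(empFlow φ x t) = (1 / t) * ∫ s in (0:ℝ)..t, g (φ s x) := by
  rw [empFlow, integral_smul_measure,
    integral_map (cont_orbit hφc x).aemeasurable g.continuous.aestronglyMeasurable,
    intervalIntegral.integral_of_le ht.le, ENNReal.toReal_inv, ENNReal.toReal_ofReal ht.le,
    smul_eq_mul, one_div]

lemma genericPt_iff (hφc : Continuous fun p : ℝ × Λ => φ p.1 p.2)
    (ν : ProbabilityMeasure Λ) (x : Λ) :
    GenericPt φ ν x ↔ ∀ g : C(Λ, ℝ),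
      Tendsto (fun t : ℝ => (1 / t) * ∫ s in (0:ℝ)..t, g (φ s x)) atTop
        (nhds (∫ y, g y ∂(ν : Measure Λ))) := by
  constructor <;> intro h g <;> refine (h g).congr' ?_ <;>
    filter_upwards [eventually_gt_atTop (0:ℝ)] with t ht
  · exact (emp_integral_eq hφc g x ht)
  · exact (emp_integral_eq hφc g x ht).symm

/-- Time-average shift computation. -/
lemma tendsto_shift (f : ℝ → ℝ) (hf : Continuous f) (s : ℝ) (L : ℝ)
    (h : Tendsto (fun t : ℝ => (1 / t) * ∫ u in (0:ℝ)..t, f u) atTop (nhds L)) :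
    Tendsto (fun t : ℝ => (1 / t) * ∫ u in (0:ℝ)..t, f (u + s)) atTop (nhds L) := by
  have key : ∀ t : ℝ, (∫ u in (0:ℝ)..t, f (u + s))
      = (∫ u in (0:ℝ)..(s + t), f u) - ∫ u in (0:ℝ)..s, f u := by
    intro t
    rw [intervalIntegral.integral_comp_add_right, zero_add]
    have := intervalIntegral.integral_add_adjacent_intervals
      (a := (0:ℝ)) (b := s) (c := t + s) (f := f) (μ := volume)
      (hf.intervalIntegrable _ _) (hf.intervalIntegrable _ _)
    rw [show s + t = t + s by ring]
    linarith [this]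
  have h1 : Tendsto (fun t : ℝ => (1 / (s + t)) * ∫ u in (0:ℝ)..(s + t), f u) atTop (nhds L) :=
    h.comp (tendsto_atTop_add_const_left atTop s tendsto_id)
  have h2 : Tendsto (fun t : ℝ => (s + t) / t) atTop (nhds 1) := by
    have : Tendsto (fun t : ℝ => s * t⁻¹ + 1) atTop (nhds (s * 0 + 1)) :=
      ((tendsto_inv_atTop_zero.const_mul s).add tendsto_const_nhds)
    rw [mul_zero, zero_add] at this
    refine this.congr' ?_
    filter_upwards [eventually_gt_atTop (0:ℝ)] with t ht
    field_simp
  have h3 : Tendsto (fun t : ℝ => (1 / t) * ∫ u in (0:ℝ)..s, f u) atTop (nhds 0) := by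
    have := tendsto_inv_atTop_zero.mul_const (∫ u in (0:ℝ)..s, f u)
    simpa [one_div] using this
  have h4 : Tendsto (fun t : ℝ =>
      ((s + t) / t) * ((1 / (s + t)) * ∫ u in (0:ℝ)..(s + t), f u)
        - (1 / t) * ∫ u in (0:ℝ)..s, f u) atTop (nhds (1 * L - 0)) :=
    (h2.mul h1).sub h3
  rw [one_mul, sub_zero] at h4
  refine h4.congr' ?_
  filter_upwards [eventually_gt_atTop (max 0 (-s))] with t ht
  have ht0 : 0 < t := lt_of_le_of_lt (le_max_left _ _) ht
  have hst : 0 < s + t := by have := lt_of_le_of_lt (le_max_right _ _) ht; linarith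
  rw [key]
  field_simp

/-- Generic points are invariant under the flow. -/
lemma genericPt_flow (hφc : Continuous fun p : ℝ × Λ => φ p.1 p.2)
    (hφadd : ∀ s t x, φ (s + t) x = φ s (φ t x))
    (ν : ProbabilityMeasure Λ) {x : Λ} (hx : GenericPt φ ν x) (s : ℝ) :
    GenericPt φ ν (φ s x) := by
  rw [genericPt_iff hφc] at hx ⊢
  intro g
  have := tendsto_shift (fun u => g (φ u x)) (g.continuous.comp (cont_orbit hφc x)) s _ (hx g)
  refine this.congr ?_
  intro t
  congr 1
  refine intervalIntegral.integral_congr fun u _ => ?_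
  rw [← hφadd u s x, add_comm]

/-- The orbit of a generic point is dense in the support of `ν`. -/
lemma orbit_dense (hφc : Continuous fun p : ℝ × Λ => φ p.1 p.2)
    (ν : ProbabilityMeasure Λ) (Λ₀ : Set Λ)
    (hsupp : ∀ U : Set Λ, IsOpen U → (U ∩ Λ₀).Nonempty → 0 < (ν : Measure Λ) U)
    {x : Λ} (hx : GenericPt φ ν x) {z : Λ} (hz : z ∈ Λ₀) :
    z ∈ closure (Set.range fun u => φ u x) := by
  by_contra hcl
  rw [Metric.mem_closure_iff] at hcl
  push_neg at hcl
  obtain ⟨ε, hε, hdist⟩ := hcl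
  -- bump function around z
  set f : Λ → ℝ := fun w => max (ε - dist w z) 0 with hf
  have hfc : Continuous f := ((continuous_const.sub (continuous_id.dist continuous_const)).max
    continuous_const)
  have hforbit : ∀ u : ℝ, f (φ u x) = 0 := by
    intro u
    have : ε ≤ dist (φ u x) z := by
      have := hdist (φ u x) ⟨u, rfl⟩
      rwa [dist_comm] at this
    simp [hf, max_eq_right, sub_nonpos.2 this]
  have hint : Integrable f (ν : Measure Λ) := hfc.integrable_of_hasCompactSupport
    (HasCompactSupport.of_compactSpace _)
  have hpos : 0 < ∫ w, f w ∂(ν : Measure Λ) := by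
    refine (integral_pos_iff_support_of_nonneg (fun w => le_max_right _ _) hint).2 ?_
    refine lt_of_lt_of_le (hsupp (Metric.ball z ε) Metric.isOpen_ball ⟨z, Metric.mem_ball_self hε, hz⟩)
      (measure_mono ?_)
    intro w hw
    simp only [Function.mem_support, hf]
    have : 0 < ε - dist w z := by
      rw [Metric.mem_ball] at hw; linarith
    positivity
  -- but empirical integrals along the orbit are zero
  rw [genericPt_iff hφc] at hx
  have h0 : Tendsto (fun t : ℝ => (1 / t) * ∫ s in (0:ℝ)..t, (⟨f, hfc⟩ : C(Λ,ℝ)) (φ s x))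
      atTop (nhds (∫ y, f y ∂(ν : Measure Λ))) := hx ⟨f, hfc⟩
  have h0' : Tendsto (fun _ : ℝ => (0:ℝ)) atTop (nhds (∫ y, f y ∂(ν : Measure Λ))) := by
    refine h0.congr fun t => ?_
    simp only [ContinuousMap.coe_mk, hforbit, intervalIntegral.integral_zero, mul_zero]
  have := tendsto_nhds_unique h0' tendsto_const_nhds
  rw [this] at hpos
  exact lt_irrefl _ hpos

end aux

/-- If `Λ_n ⊆ Λ` are compact invariant sets converging to `Λ` in the
Hausdorff distance, each carrying an invariant probability measure `ν_n` with full support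
in `Λ_n` and a generic point, then `⋃_n G_{ν_n}` is dense in `Λ`; in particular, if
`∫ g dν_n = a` for all `n`, then the level set `R_g(a)` is dense in `Λ`. -/
theorem generic_points_dense
    {Λ : Type*} [MetricSpace Λ] [CompactSpace Λ] [MeasurableSpace Λ] [BorelSpace Λ]
    (φ : ℝ → Λ → Λ) (hφc : Continuous fun p : ℝ × Λ => φ p.1 p.2)
    (hφ0 : ∀ x, φ 0 x = x) (hφadd : ∀ s t x, φ (s + t) x = φ s (φ t x))
    (Λn : ℕ → Set Λ) (hcpt : ∀ n, IsCompact (Λn n)) (hinvset : ∀ n t, φ t '' Λn n = Λn n)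
    (νn : ℕ → ProbabilityMeasure Λ)
    (hνinv : ∀ n t, Measure.map (φ t) (νn n : Measure Λ) = (νn n : Measure Λ))
    -- `supp ν_n = Λ_n`
    (hsupp₀ : ∀ n, (νn n : Measure Λ) (Λn n)ᶜ = 0)
    (hsupp₁ : ∀ n, ∀ U : Set Λ, IsOpen U → (U ∩ Λn n).Nonempty →
      0 < (νn n : Measure Λ) U)
    (hgen : ∀ n, {x : Λ | GenericPt φ (νn n) x}.Nonempty)
    (hHaus : Tendsto (fun n => Metric.hausdorffDist (Λn n) (Set.univ : Set Λ))
      atTop (nhds 0)) :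
    Dense (⋃ n, {x : Λ | GenericPt φ (νn n) x}) ∧
    ∀ (g : Λ → ℝ), Continuous g → ∀ a : ℝ,
      (∀ n, (∫ x, g x ∂(νn n : Measure Λ)) = a) →
      Dense {x : Λ | Tendsto (fun T : ℝ => (1 / T) * ∫ t in (0:ℝ)..T, g (φ t x))
        atTop (nhds a)} := by
  -- `Λn n` is nonempty
  have hne : ∀ n, (Λn n).Nonempty := by
    intro n
    by_contra h
    rw [Set.not_nonempty_iff_eq_empty] at h
    have := hsupp₀ n
    rw [h, Set.compl_empty] at this
    simp [measure_univ] at this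
  -- closure of `G n` contains `Λn n`
  have hclo : ∀ n, Λn n ⊆ closure {x : Λ | GenericPt φ (νn n) x} := by
    intro n z hz
    obtain ⟨x, hx⟩ := hgen n
    have horb := orbit_dense hφc (νn n) (Λn n) (hsupp₁ n) hx hz
    refine closure_mono ?_ horb
    rintro _ ⟨u, rfl⟩
    exact genericPt_flow hφc hφadd (νn n) hx u
  -- density of the union
  have hdense : Dense (⋃ n, {x : Λ | GenericPt φ (νn n) x}) := by
    rw [Metric.dense_iff]
    intro y r hr
    have hev : ∀ᶠ n in atTop, Metric.hausdorffDist (Λn n) (Set.univ : Set Λ) < r / 2 := by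
      have := hHaus.eventually (eventually_lt_nhds (show (0:ℝ) < r / 2 by linarith))
      exact this
    obtain ⟨N, hN⟩ := hev.exists
    have hfin : EMetric.hausdorffEdist (Set.univ : Set Λ) (Λn N) ≠ ⊤ :=
      Metric.hausdorffEdist_ne_top_of_nonempty_of_bounded ⟨y, trivial⟩ (hne N)
        isCompact_univ.isBounded (hcpt N).isBounded
    have hinf : Metric.infDist y (Λn N) < r / 2 := by
      calc Metric.infDist y (Λn N)
          ≤ Metric.hausdorffDist (Set.univ : Set Λ) (Λn N) :=
            Metric.infDist_le_hausdorffDist_of_mem trivial hfin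
        _ = Metric.hausdorffDist (Λn N) (Set.univ : Set Λ) := Metric.hausdorffDist_comm
        _ < r / 2 := hN
    obtain ⟨z, hzmem, hzd⟩ := (Metric.infDist_lt_iff (hne N)).1 hinf
    have hz' := hclo N hzmem
    rw [Metric.mem_closure_iff] at hz'
    obtain ⟨w, hw, hwd⟩ := hz' (r / 2) (by linarith)
    refine ⟨w, ?_, Set.mem_iUnion.2 ⟨N, hw⟩⟩
    rw [Metric.mem_ball]
    calc dist w y ≤ dist w z + dist z y := dist_triangle _ _ _
      _ < r / 2 + r / 2 := by rw [dist_comm w z, dist_comm z y]; exact add_lt_add hwd hzd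
      _ = r := by ring
  refine ⟨hdense, fun g hg a ha => ?_⟩
  refine hdense.mono ?_
  rw [Set.iUnion_subset_iff]
  intro n x hx
  simp only [Set.mem_setOf_eq] at hx ⊢
  rw [genericPt_iff hφc] at hx
  have := hx ⟨g, hg⟩
  simpa [ha n] using this
end

section
/- Let (Σ,σ) be a transitive subshift of finite type with suspension flow 𝔉 over a continuous roof ρ, let Λ be a compact invariant set of a flow Φ, and let π : Σ_ρ → Λ be a finite-to-one continuous surjection satisfying π∘σ_t = φ_t∘π that preserves entropy of invariant measures and of invariant sets. For g ∈ C(Λ,ℝ) set ĝ = g∘π. Then π(R^ρ_{ĝ}(𝔉,a)) = R_g(a) for every a ∈ ℝ and π(I^ρ_{ĝ}(𝔉)) = I_g; consequently h_top(R_g(a)) = sup{h_μ(X) : μ ∈ M_inv(Λ), ∫g dμ = a}, and if inf_μ ∫g dμ < sup_μ ∫g dμ over M_inv(Λ) then h_top(I_g) = h_top(Λ), given that the corresponding statements hold for the suspension flow. -/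
open MeasureTheory Filter Topology

/-- Invariance of a probability measure under a flow. -/
def FlowInvPM {Y : Type*} [TopologicalSpace Y] [MeasurableSpace Y]
    (F : ℝ → Y → Y) (ν : ProbabilityMeasure Y) : Prop :=
  ∀ t : ℝ, MeasureTheory.Measure.map (F t) (ν : MeasureTheory.Measure Y) = (ν : MeasureTheory.Measure Y)

/-- The level set `R_g(a)` of Birkhoff flow averages. -/
def levelSet {Λ : Type*} [TopologicalSpace Λ] [MeasurableSpace Λ]
    (φ : ℝ → Λ → Λ) (g : Λ → ℝ) (a : ℝ) : Set Λ :=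
  {x | Filter.Tendsto (fun T : ℝ => (1 / T) * ∫ t in (0:ℝ)..T, g (φ t x))
    Filter.atTop (nhds a)}

/-- The irregular set `I_g`: points whose Birkhoff flow average of `g` does not exist. -/
def irrSet {Λ : Type*} [TopologicalSpace Λ] [MeasurableSpace Λ]
    (φ : ℝ → Λ → Λ) (g : Λ → ℝ) : Set Λ :=
  {x | ¬ ∃ a : ℝ, x ∈ levelSet φ g a}

/-- Let `π : Y → Λ` be a finite-to-one continuous surjective
semiconjugacy from the suspension flow `σt` of a transitive SFT onto the flow `φ` on `Λ`,
preserving entropy of invariant measures and of invariant sets, and let `ĝ = g ∘ π`.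
Then the level and irregular sets correspond under `π`; consequently
`h_top(R_g(a)) = sup{h_μ : μ invariant, ∫ g dμ = a}`, and if two invariant measures give
`g` different integrals then `h_top(I_g) = h_top(Λ)`, given Thompson's theorems upstairs. -/
theorem factor_multifractal
    {Y Λ : Type*} [MetricSpace Y] [CompactSpace Y] [MeasurableSpace Y] [BorelSpace Y]
    [MetricSpace Λ] [CompactSpace Λ] [MeasurableSpace Λ] [BorelSpace Λ]
    (σt : ℝ → Y → Y) (hσc : Continuous fun p : ℝ × Y => σt p.1 p.2)
    (φ : ℝ → Λ → Λ) (hφc : Continuous fun p : ℝ × Λ => φ p.1 p.2)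
    (π : Y → Λ) (hπc : Continuous π) (hπs : Function.Surjective π)
    (hfin : ∀ x : Λ, (π ⁻¹' {x}).Finite)
    (hsemi : ∀ t y, π (σt t y) = φ t (π y))
    (g : Λ → ℝ) (hg : Continuous g)
    -- entropies of invariant measures upstairs and downstairs
    (entY : ProbabilityMeasure Y → ℝ) (entL : ProbabilityMeasure Λ → ℝ)
    -- topological entropies of arbitrary subsets upstairs and downstairs
    (htopY : Set Y → ℝ) (htopL : Set Λ → ℝ)
    -- `π` preserves entropy of invariant measures, in both directions
    (hpush : ∀ μ : ProbabilityMeasure Y, FlowInvPM σt μ →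
      ∃ ν : ProbabilityMeasure Λ, FlowInvPM φ ν ∧
        (ν : Measure Λ) = Measure.map π (μ : Measure Y) ∧ entY μ = entL ν)
    (hlift : ∀ ν : ProbabilityMeasure Λ, FlowInvPM φ ν →
      ∃ μ : ProbabilityMeasure Y, FlowInvPM σt μ ∧
        Measure.map π (μ : Measure Y) = (ν : Measure Λ) ∧ entY μ = entL ν)
    -- `π` preserves topological entropy of subsets
    (hsets : ∀ Z : Set Y, htopY Z = htopL (π '' Z))
    -- Thompson's variational principle for level sets, for the suspension flow
    (hThomLevel : ∀ a : ℝ, htopY (levelSet σt (g ∘ π) a) =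
      sSup (entY '' {μ : ProbabilityMeasure Y | FlowInvPM σt μ ∧
        (∫ y, g (π y) ∂(μ : Measure Y)) = a}))
    -- Thompson's theorem on irregular sets, for the suspension flow
    (hThomIrr : (∃ μ₁ μ₂ : ProbabilityMeasure Y, FlowInvPM σt μ₁ ∧ FlowInvPM σt μ₂ ∧
        (∫ y, g (π y) ∂(μ₁ : Measure Y)) ≠ ∫ y, g (π y) ∂(μ₂ : Measure Y)) →
      htopY (irrSet σt (g ∘ π)) = htopY Set.univ) :
    (∀ a : ℝ, π '' levelSet σt (g ∘ π) a = levelSet φ g a) ∧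
    π '' irrSet σt (g ∘ π) = irrSet φ g ∧
    (∀ a : ℝ, htopL (levelSet φ g a) =
      sSup (entL '' {ν : ProbabilityMeasure Λ | FlowInvPM φ ν ∧
        (∫ x, g x ∂(ν : Measure Λ)) = a})) ∧
    ((∃ ν₁ ν₂ : ProbabilityMeasure Λ, FlowInvPM φ ν₁ ∧ FlowInvPM φ ν₂ ∧
        (∫ x, g x ∂(ν₁ : Measure Λ)) ≠ ∫ x, g x ∂(ν₂ : Measure Λ)) →
      htopL (irrSet φ g) = htopL Set.univ) := by
  -- key pointwise fact: membership transfers under π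
  have hmem : ∀ (a : ℝ) (y : Y), y ∈ levelSet σt (g ∘ π) a ↔ π y ∈ levelSet φ g a := by
    intro a y
    have : (fun T : ℝ => (1 / T) * ∫ t in (0:ℝ)..T, (g ∘ π) (σt t y)) =
        fun T : ℝ => (1 / T) * ∫ t in (0:ℝ)..T, g (φ t (π y)) := by
      funext T; congr 1; apply intervalIntegral.integral_congr
      intro t _; simp [Function.comp, hsemi]
    simp only [levelSet, Set.mem_setOf_eq, this]
  have hlevel : ∀ a : ℝ, π '' levelSet σt (g ∘ π) a = levelSet φ g a := by
    intro a
    ext x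
    constructor
    · rintro ⟨y, hy, rfl⟩; exact (hmem a y).1 hy
    · intro hx; obtain ⟨y, rfl⟩ := hπs x
      exact ⟨y, (hmem a y).2 hx, rfl⟩
  have hirr : π '' irrSet σt (g ∘ π) = irrSet φ g := by
    ext x
    constructor
    · rintro ⟨y, hy, rfl⟩ ⟨a, ha⟩
      exact hy ⟨a, (hmem a y).2 ha⟩
    · intro hx; obtain ⟨y, rfl⟩ := hπs x
      exact ⟨y, fun ⟨a, ha⟩ => hx ⟨a, (hmem a y).1 ha⟩, rfl⟩
  -- integral transfer
  have hint : ∀ (μ : ProbabilityMeasure Y),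
      (∫ y, g (π y) ∂(μ : Measure Y)) = ∫ x, g x ∂(Measure.map π (μ : Measure Y)) := by
    intro μ
    rw [integral_map hπc.measurable.aemeasurable hg.aestronglyMeasurable]
  refine ⟨hlevel, hirr, ?_, ?_⟩
  · intro a
    have hsetEq : entY '' {μ : ProbabilityMeasure Y | FlowInvPM σt μ ∧
        (∫ y, g (π y) ∂(μ : Measure Y)) = a} =
        entL '' {ν : ProbabilityMeasure Λ | FlowInvPM φ ν ∧
        (∫ x, g x ∂(ν : Measure Λ)) = a} := by
      ext e
      constructor
      · rintro ⟨μ, ⟨hinv, hI⟩, rfl⟩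
        obtain ⟨ν, hνinv, hmap, hent⟩ := hpush μ hinv
        exact ⟨ν, ⟨hνinv, by rw [hmap, ← hint μ]; exact hI⟩, hent.symm⟩
      · rintro ⟨ν, ⟨hinv, hI⟩, rfl⟩
        obtain ⟨μ, hμinv, hmap, hent⟩ := hlift ν hinv
        exact ⟨μ, ⟨hμinv, by rw [hint μ, hmap]; exact hI⟩, hent⟩
    rw [← hlevel a, ← hsets, hThomLevel a, hsetEq]
  · rintro ⟨ν₁, ν₂, h₁, h₂, hne⟩
    obtain ⟨μ₁, hμ₁, hmap₁, -⟩ := hlift ν₁ h₁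
    obtain ⟨μ₂, hμ₂, hmap₂, -⟩ := hlift ν₂ h₂
    have hI₁ : (∫ y, g (π y) ∂(μ₁ : Measure Y)) = ∫ x, g x ∂(ν₁ : Measure Λ) := by
      rw [hint μ₁, hmap₁]
    have hI₂ : (∫ y, g (π y) ∂(μ₂ : Measure Y)) = ∫ x, g x ∂(ν₂ : Measure Λ) := by
      rw [hint μ₂, hmap₂]
    have hup := hThomIrr ⟨μ₁, μ₂, hμ₁, hμ₂, by rw [hI₁, hI₂]; exact hne⟩
    have huniv : π '' (Set.univ : Set Y) = Set.univ := Set.image_univ_of_surjective hπs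
    calc htopL (irrSet φ g) = htopY (irrSet σt (g ∘ π)) := by rw [← hirr, ← hsets]
      _ = htopY Set.univ := hup
      _ = htopL Set.univ := by rw [hsets, huniv]
end
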